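/- Let d ≥ 1 and a ∈ ℝ. The function s ↦ {(1 − ‖s‖₁) s_1 ⋯ s_d}^{−a} is Lebesgue-integrable on the simplex S_d if and only if a < 1. -/

import Mathlib

open MeasureTheory Filter Topology
open scoped ENNReal BigOperators

noncomputable section

/-- The d-dimensional simplex `S_d = {s ∈ [0,1]^d : s_1 + ⋯ + s_d ≤ 1}`. -/
def Sd (d : ℕ) : Set (Fin d → ℝ) :=
  {s | (∀ i, 0 ≤ s i ∧ s i ≤ 1) ∧ ∑ i, s i ≤ 1}

/-- The Dirichlet density `K_{u,v}` on `S_d` (0 outside). -/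
def dirK (d : ℕ) (u : Fin d → ℝ) (v : ℝ) : (Fin d → ℝ) → ℝ :=
  Set.indicator (Sd d)
    (fun s => Real.Gamma (v + ∑ i, u i) / (Real.Gamma v * ∏ i, Real.Gamma (u i)) *
      (1 - ∑ i, s i) ^ (v - 1) * ∏ i, (s i) ^ (u i - 1))

/-- The Dirichlet kernel `K_{s/b+1, (1-‖s‖₁)/b+1}` at location `s` with bandwidth `b`. -/
def dirKb (d : ℕ) (b : ℝ) (s : Fin d → ℝ) : (Fin d → ℝ) → ℝ :=
  dirK d (fun i => s i / b + 1) ((1 - ∑ i, s i) / b + 1)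

/-- The Dirichlet kernel density estimator based on the sample `X`. -/
def fhat (d n : ℕ) (b : ℝ) (X : Fin n → Fin d → ℝ) (s : Fin d → ℝ) : ℝ :=
  (n : ℝ)⁻¹ * ∑ i, dirKb d b s (X i)

/-- `m` = the largest integer strictly less than `β` (for `β > 0`). -/
def mOf (β : ℝ) : ℕ := ⌈β⌉₊ - 1

/-- Partial derivative of order `j` in the directions `v` (on the interior of the simplex). -/
def Dpartial (d j : ℕ) (f : (Fin d → ℝ) → ℝ) (v : Fin j → Fin d) (s : Fin d → ℝ) : ℝ :=
  iteratedFDerivWithin ℝ j f (interior (Sd d)) s fun i => Pi.single (v i) 1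

/-- The Hölder class `Σ(d, β, L)` of probability densities supported on `S_d`. -/
def holderClass (d : ℕ) (β L : ℝ) : Set ((Fin d → ℝ) → ℝ) :=
  {f | (∀ s, 0 ≤ f s) ∧ (∀ s, s ∉ Sd d → f s = 0) ∧ (∫ s in Sd d, f s) = 1 ∧
    ContDiffOn ℝ (mOf β) f (interior (Sd d)) ∧
    ∀ v : Fin (mOf β) → Fin d, ∀ s ∈ interior (Sd d), ∀ t ∈ interior (Sd d),
      |Dpartial d (mOf β) f v s - Dpartial d (mOf β) f v t| ≤
        L * (∑ i, |s i - t i|) ^ (β - (mOf β : ℝ))}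

/-- `E_f ‖f̂_{n,b} − f‖_p^p`: expectation, under i.i.d. sampling of `X_1, …, X_n` from the
density `f`, of the `p`-th power of the `L^p` distance between `f̂_{n,b}` and `f` on `S_d`. -/
def lpRiskPow (d n : ℕ) (b p : ℝ) (f : (Fin d → ℝ) → ℝ) : ℝ :=
  ∫ ω : Fin n → Fin d → ℝ,
    (∏ i, f (ω i)) * ∫ s in Sd d, |fhat d n b ω s - f s| ^ p


/-! The integrand is `x₀^{-a} x₁^{-a} ⋯ x_d^{-a}` in the barycentric coordinates
`x₀ = 1 - ‖s‖₁`, `x_i = s_i` of the simplex, and the affine involution exchanging `x₀` and `x_j`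
preserves both Lebesgue measure and the integrand. At every point some barycentric coordinate is
at least `1/(d+1)`. Where this is `x₀`, the integrand is bounded by a multiple of `∏ s_i^{-a}`,
which is integrable on the unit cube for `a < 1`; the remaining pieces of the simplex are images of
this one under the involutions. Conversely, on the cube `(0, 1/d)^d` the integrand dominates
`s_1^{-a}`, which is not integrable near `0` when `a ≥ 1`. -/

open Set Function

section Pi

variable {ι : Type*} [Fintype ι] {X : ι → Type*} [∀ i, MeasurableSpace (X i)]
  {μ : (i : ι) → Measure (X i)}

theorem integrableOn_univ_pi_prod [∀ i, SigmaFinite (μ i)] {f : (i : ι) → X i → ℝ}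
    {I : (i : ι) → Set (X i)} (hf : ∀ i, IntegrableOn (f i) (I i) (μ i)) :
    IntegrableOn (fun x ↦ ∏ i, f i (x i)) (univ.pi I) (Measure.pi μ) := by
  rw [IntegrableOn, Measure.restrict_pi_pi]
  exact Integrable.fintype_prod_dep hf

theorem integrable_of_integrable_comp_eval {E : Type*} [NormedAddCommGroup E]
    [∀ j, IsFiniteMeasure (μ j)] {i : ι} {f : X i → E} (hμ : ∀ j ≠ i, μ j ≠ 0)
    (hf : AEStronglyMeasurable f (μ i)) (h : Integrable (fun x ↦ f (x i)) (Measure.pi μ)) :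
    Integrable f (μ i) := by
  classical
  have hc : ∏ j ∈ Finset.univ.erase i, μ j univ ≠ 0 := Finset.prod_ne_zero_iff.2 fun j hj ↦
    Measure.measure_univ_ne_zero.2 (hμ j (Finset.ne_of_mem_erase hj))
  rw [← integrable_smul_measure hc (ENNReal.prod_ne_top fun j _ ↦ measure_ne_top _ _),
    ← Measure.pi_map_eval]
  exact (integrable_map_measure (by rw [Measure.pi_map_eval]; exact hf.smul_measure _)
    (measurable_pi_apply i).aemeasurable).2 h

end Pi

theorem AffineMap.measurePreserving_of_involutive {E : Type*} [NormedAddCommGroup E]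
    [NormedSpace ℝ E] [MeasurableSpace E] [BorelSpace E] [FiniteDimensional ℝ E]
    (μ : Measure E) [μ.IsAddHaarMeasure] {T : E →ᵃ[ℝ] E} (hT : Involutive T) :
    MeasurePreserving T μ μ := by
  have hL : T.linear.comp T.linear = LinearMap.id := by
    rw [← AffineMap.comp_linear, show T.comp T = AffineMap.id ℝ E from AffineMap.ext hT,
      AffineMap.id_linear]
  have hdet : |LinearMap.det T.linear| = 1 :=
    (pow_eq_one_iff_of_nonneg (abs_nonneg _) two_ne_zero).1 <| by
      rw [sq_abs, sq, ← LinearMap.det_comp, hL, LinearMap.det_id]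
  have hLμ : MeasurePreserving T.linear μ μ :=
    ⟨T.linear.continuous_of_finiteDimensional.measurable, by
      rw [Measure.map_linearMap_addHaar_eq_smul_addHaar μ (by simp [← abs_ne_zero, hdet]),
        abs_inv, hdet, inv_one, ENNReal.ofReal_one, one_smul]⟩
  rw [AffineMap.decomp]
  exact (measurePreserving_add_right μ (T 0)).comp hLμ

section Barycentric

variable {ι : Type*} [Fintype ι]

def barycentricProd (s : ι → ℝ) : ℝ := (1 - ∑ i, s i) * ∏ i, s i

variable [DecidableEq ι]

def barycentricSwap (j : ι) : (ι → ℝ) →ᵃ[ℝ] (ι → ℝ) where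
  toFun s := update s j (1 - ∑ i, s i)
  linear := LinearMap.pi (update LinearMap.proj j (-∑ i, LinearMap.proj i))
  map_vadd' s v := by
    ext k
    rcases eq_or_ne k j with rfl | hk
    · simp [Finset.sum_add_distrib]
      ring
    · simp [hk]

theorem barycentricSwap_apply (j : ι) (s : ι → ℝ) :
    barycentricSwap j s = update s j (1 - ∑ i, s i) := rfl

theorem sum_barycentricSwap (j : ι) (s : ι → ℝ) : ∑ i, barycentricSwap j s i = 1 - s j := by
  rw [barycentricSwap_apply, Finset.sum_update_of_mem (Finset.mem_univ j),
    Finset.sum_eq_add_sum_sdiff_singleton_of_mem (Finset.mem_univ j) s]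
  ring

theorem barycentricSwap_involutive (j : ι) : Involutive (barycentricSwap j) := fun s ↦ by
  rw [barycentricSwap_apply (s := barycentricSwap j s), sum_barycentricSwap, sub_sub_cancel,
    barycentricSwap_apply, update_idem, update_eq_self]

theorem barycentricProd_barycentricSwap (j : ι) (s : ι → ℝ) :
    barycentricProd (barycentricSwap j s) = barycentricProd s := by
  rw [barycentricProd, barycentricProd, sum_barycentricSwap, barycentricSwap_apply,
    Finset.prod_update_of_mem (Finset.mem_univ j),
    Finset.prod_eq_mul_prod_sdiff_singleton_of_mem (Finset.mem_univ j) s]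
  ring

end Barycentric

section Simplex

variable {d : ℕ}

theorem mem_Sd_iff {s : Fin d → ℝ} : s ∈ Sd d ↔ (∀ i, 0 ≤ s i) ∧ ∑ i, s i ≤ 1 := by
  refine ⟨fun hs ↦ ⟨fun i ↦ (hs.1 i).1, hs.2⟩, fun ⟨h0, h1⟩ ↦ ⟨fun i ↦ ⟨h0 i, ?_⟩, h1⟩⟩
  exact (Finset.single_le_sum (fun k _ ↦ h0 k) (Finset.mem_univ i)).trans h1

theorem measurableSet_Sd (d : ℕ) : MeasurableSet (Sd d) := by
  unfold Sd
  measurability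

theorem barycentricSwap_mapsTo_Sd (j : Fin d) : MapsTo (barycentricSwap j) (Sd d) (Sd d) := by
  intro s hs
  rw [mem_Sd_iff] at hs ⊢
  refine ⟨fun i ↦ ?_, by linarith [hs.1 j, sum_barycentricSwap j s]⟩
  rcases eq_or_ne i j with rfl | hi
  · simpa [barycentricSwap_apply] using hs.2
  · simpa [barycentricSwap_apply, hi] using hs.1 i

theorem barycentricProd_le_of_mem_Sd {s : Fin d → ℝ} (hs : s ∈ Sd d) (j : Fin d) :
    barycentricProd s ≤ s j := by
  obtain ⟨h0, h1⟩ := hs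
  have hprod : 0 ≤ ∏ i, s i := Finset.prod_nonneg fun i _ ↦ (h0 i).1
  calc barycentricProd s ≤ ∏ i, s i := mul_le_of_le_one_left hprod
        (by linarith [Finset.sum_nonneg fun i (_ : i ∈ Finset.univ) ↦ (h0 i).1])
    _ = s j * ∏ i ∈ Finset.univ \ {j}, s i :=
        Finset.prod_eq_mul_prod_sdiff_singleton_of_mem (Finset.mem_univ j) s
    _ ≤ s j := mul_le_of_le_one_right (h0 j).1 (Finset.prod_le_one (fun i _ ↦ (h0 i).1)
        fun i _ ↦ (h0 i).2)

theorem barycentricProd_rpow_eq {s : Fin d → ℝ} (hs : s ∈ Sd d) (a : ℝ) :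
    barycentricProd s ^ (-a) = (1 - ∑ i, s i) ^ (-a) * ∏ i, s i ^ (-a) := by
  rw [mem_Sd_iff] at hs
  rw [barycentricProd, Real.mul_rpow (by linarith [hs.2]) (Finset.prod_nonneg fun i _ ↦ hs.1 i),
    Real.finsetProd_rpow _ _ fun i _ ↦ hs.1 i]

theorem inv_succ_le_one_sub_sum_or_exists_le (s : Fin d → ℝ) :
    ((d : ℝ) + 1)⁻¹ ≤ 1 - ∑ i, s i ∨ ∃ j, ((d : ℝ) + 1)⁻¹ ≤ s j := by
  by_contra! h
  have hsum : ∑ i, s i ≤ d * ((d : ℝ) + 1)⁻¹ := by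
    simpa using Finset.sum_le_sum fun i (_ : i ∈ Finset.univ) ↦ (h.2 i).le
  have hc : ((d : ℝ) + 1) * ((d : ℝ) + 1)⁻¹ = 1 := mul_inv_cancel₀ (by positivity)
  linarith [h.1]

end Simplex

section Integrability

variable {d : ℕ} {a : ℝ}

theorem measurable_barycentricProd_rpow :
    Measurable fun s : Fin d → ℝ ↦ barycentricProd s ^ (-a) := by
  unfold barycentricProd
  fun_prop

theorem integrableOn_prod_rpow_Sd (ha : a < 1) :
    IntegrableOn (fun s : Fin d → ℝ ↦ ∏ i, s i ^ (-a)) (Sd d) := by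
  have h01 : IntegrableOn (fun x : ℝ ↦ x ^ (-a)) (Icc 0 1) := by
    rw [integrableOn_Icc_iff_integrableOn_Ioc,
      ← intervalIntegrable_iff_integrableOn_Ioc_of_le zero_le_one]
    exact intervalIntegral.intervalIntegrable_rpow' (by linarith)
  exact (integrableOn_univ_pi_prod fun _ ↦ h01).mono_set fun s hs i _ ↦ hs.1 i

theorem integrableOn_barycentricProd_rpow_of_le {c : ℝ} (hc : 0 < c) (ha : a < 1) :
    IntegrableOn (fun s ↦ barycentricProd s ^ (-a)) {s ∈ Sd d | c ≤ 1 - ∑ i, s i} := by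
  have hbound : ∀ x, c ≤ x → x ≤ 1 → x ^ (-a) ≤ max (c ^ (-a)) 1 := fun x hcx hx1 ↦ by
    rcases le_total 0 a with ha0 | ha0
    · exact le_max_of_le_left (Real.rpow_le_rpow_of_nonpos hc hcx (by linarith))
    · exact le_max_of_le_right (Real.rpow_le_one (by linarith) hx1 (by linarith))
  have hmeas : MeasurableSet {s ∈ Sd d | c ≤ 1 - ∑ i, s i} :=
    (measurableSet_Sd d).inter (measurableSet_le measurable_const
      (by fun_prop : Measurable fun s : Fin d → ℝ ↦ 1 - ∑ i, s i))
  refine (((integrableOn_prod_rpow_Sd ha).mono_set (sep_subset _ _)).const_mul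
    (max (c ^ (-a)) 1)).mono' measurable_barycentricProd_rpow.aestronglyMeasurable ?_
  filter_upwards [ae_restrict_mem hmeas] with s ⟨hs, hcs⟩
  obtain ⟨h0, h1⟩ := mem_Sd_iff.1 hs
  have hprod : 0 ≤ ∏ i, s i ^ (-a) := Finset.prod_nonneg fun i _ ↦ Real.rpow_nonneg (h0 i) _
  rw [barycentricProd_rpow_eq hs,
    Real.norm_of_nonneg (mul_nonneg (Real.rpow_nonneg (by linarith) _) hprod)]
  exact mul_le_mul_of_nonneg_right
    (hbound _ hcs (by linarith [Finset.sum_nonneg fun i (_ : i ∈ Finset.univ) ↦ h0 i])) hprod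

theorem integrableOn_barycentricProd_rpow_Sd (ha : a < 1) :
    IntegrableOn (fun s : Fin d → ℝ ↦ barycentricProd s ^ (-a)) (Sd d) := by
  set A := {s ∈ Sd d | ((d : ℝ) + 1)⁻¹ ≤ 1 - ∑ i, s i}
  have hA : IntegrableOn (fun s ↦ barycentricProd s ^ (-a)) A :=
    integrableOn_barycentricProd_rpow_of_le (by positivity) ha
  have hswap (j : Fin d) :
      IntegrableOn (fun s ↦ barycentricProd s ^ (-a)) (barycentricSwap j ⁻¹' A) := by
    have hT := barycentricSwap_involutive j
    have hTμ := AffineMap.measurePreserving_of_involutive volume hT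
    have := hTμ.integrableOn_comp_preimage
      (MeasurableEquiv.ofInvolutive _ hT hTμ.measurable).measurableEmbedding
      (f := fun s ↦ barycentricProd s ^ (-a)) (s := A)
    simpa [comp_def, barycentricProd_barycentricSwap] using this.2 hA
  refine (hA.union (integrableOn_finite_iUnion.2 hswap)).mono_set fun s hs ↦ ?_
  rcases inv_succ_le_one_sub_sum_or_exists_le s with h | ⟨j, hj⟩
  · exact Or.inl ⟨hs, h⟩
  · refine Or.inr (mem_iUnion.2 ⟨j, barycentricSwap_mapsTo_Sd j hs, ?_⟩)
    rwa [sum_barycentricSwap, sub_sub_cancel]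

theorem lt_one_of_integrableOn_barycentricProd_rpow_Sd (hd : 1 ≤ d)
    (h : IntegrableOn (fun s : Fin d → ℝ ↦ barycentricProd s ^ (-a)) (Sd d)) : a < 1 := by
  by_contra! ha
  set c : ℝ := (d : ℝ)⁻¹
  have hc : 0 < c := by positivity
  have hdc : (d : ℝ) * c = 1 := mul_inv_cancel₀ (by positivity)
  set B := univ.pi fun _ : Fin d ↦ Ioo 0 c
  let j : Fin d := ⟨0, hd⟩
  have hBSd : B ⊆ Sd d := fun s hs ↦ mem_Sd_iff.2 ⟨fun i ↦ (hs i trivial).1.le, by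
    simpa [hdc] using Finset.sum_le_sum fun i (_ : i ∈ Finset.univ) ↦ (hs i trivial).2.le⟩
  have hlow : ∀ s ∈ B, s j ^ (-a) ≤ barycentricProd s ^ (-a) := fun s hs ↦ by
    have hsum : ∑ i, s i < 1 := by
      simpa [hdc] using Finset.sum_lt_sum_of_nonempty ⟨j, Finset.mem_univ j⟩
        fun i (_ : i ∈ Finset.univ) ↦ (hs i trivial).2
    have hpos : 0 < barycentricProd s :=
      mul_pos (by linarith) (Finset.prod_pos fun i _ ↦ (hs i trivial).1)
    exact Real.rpow_le_rpow_of_nonpos hpos (barycentricProd_le_of_mem_Sd (hBSd hs) j)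
      (by linarith)
  have hB : IntegrableOn (fun s : Fin d → ℝ ↦ s j ^ (-a)) B := by
    refine (h.mono_set hBSd).mono'
      (by fun_prop : Measurable fun s : Fin d → ℝ ↦ s j ^ (-a)).aestronglyMeasurable ?_
    filter_upwards [ae_restrict_mem (MeasurableSet.univ_pi fun _ ↦ measurableSet_Ioo)]
      with s hs
    rw [Real.norm_of_nonneg (Real.rpow_nonneg (hs j trivial).1.le _)]
    exact hlow s hs
  have hIoo : IntegrableOn (fun x : ℝ ↦ x ^ (-a)) (Ioo 0 c) := by
    refine integrable_of_integrable_comp_eval (μ := fun _ ↦ volume.restrict (Ioo 0 c)) (i := j)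
      (fun _ _ ↦ by simp [hc]) (by fun_prop) ?_
    rwa [IntegrableOn, volume_pi, Measure.restrict_pi_pi] at hB
  linarith [(intervalIntegral.integrableOn_Ioo_rpow_iff hc).1 hIoo]

end Integrability

/-- the map `s ↦ ((1-‖s‖₁) s_1 ⋯ s_d)^{-a}` is Lebesgue-integrable on
the simplex `S_d` if and only if `a < 1`. -/
theorem integrable_boundary_power_iff (d : ℕ) (hd : 1 ≤ d) (a : ℝ) :
    MeasureTheory.IntegrableOn
        (fun s : Fin d → ℝ => ((1 - ∑ i, s i) * ∏ i, s i) ^ (-a)) (Sd d) ↔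
      a < 1 :=
  ⟨lt_one_of_integrableOn_barycentricProd_rpow_Sd hd, integrableOn_barycentricProd_rpow_Sd⟩
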